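/- Let $\{Q_1,\dots,Q_d,Q\}$ be a financial experiment on $(\Omega,\mathcal{F})$ with trading times $I=\{0,T\}$ only and $\mathcal{F}_0$ trivial. Then the martingale measure $Q$ is the unique equivalent martingale measure if and only if the class $\mathcal{G}$ of strictly positive functions in $\bigcap_{i=1}^d L_1(Q_i)\cap L_1(Q)$ is complete with respect to $\{Q_1,\dots,Q_d,Q\}$, i.e. every $g\in\mathcal{G}$ with $E_{Q_i}(g)=E_Q(g)$ for all $i$ is $Q$-almost surely constant. -/

import Mathlib

/-!
Equivalent probability measures `ν ~ Q` are exactly the measures `g • Q` with `g > 0` a.e. and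
`∫ g dQ = 1`, and for such `ν` one has `∫ Xᵢ/x₀ᵢ dν = ∫ g dQᵢ`, because `dQᵢ = (Xᵢ/x₀ᵢ) dQ`.
So `ν` is a martingale measure iff its density is balanced, `∫ g dQᵢ = ∫ g dQ` for all `i`.
A balanced positive `g` that is not a.e. constant, normalised by `∫ g dQ`, gives a martingale
measure different from `Q`; conversely the density of a martingale measure `ν ≠ Q` is balanced,
positive and not a.e. constant.
-/

namespace MeasureTheory

variable {Ω : Type*} {m : MeasurableSpace Ω} {μ ν : Measure Ω} {h : Ω → ℝ}

lemma integral_pos_of_ae_pos [NeZero μ] (hint : Integrable h μ) (hpos : ∀ᵐ ω ∂μ, 0 < h ω) :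
    0 < ∫ ω, h ω ∂μ := by
  rw [integral_pos_iff_support_of_nonneg_ae (hpos.mono fun _ hω => hω.le) hint,
    pos_iff_ne_zero]
  intro hzero
  have hfalse : ∀ᵐ ω ∂μ, False := by
    filter_upwards [hpos, measure_eq_zero_iff_ae_notMem.mp hzero] with ω hω hω'
    exact hω' hω.ne'
  exact NeZero.ne μ (ae_eq_bot.mp (Filter.eventually_false_iff_eq_bot.mp hfalse))

lemma integral_withDensity_ofReal (hh : Measurable h) (hh₀ : 0 ≤ᵐ[μ] h) (φ : Ω → ℝ) :
    ∫ ω, φ ω ∂(μ.withDensity fun ω => ENNReal.ofReal (h ω)) = ∫ ω, h ω * φ ω ∂μ := by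
  rw [integral_withDensity_eq_integral_toReal_smul hh.ennreal_ofReal
    (.of_forall fun _ => ENNReal.ofReal_lt_top)]
  refine integral_congr_ae (hh₀.mono fun ω hω => ?_)
  simp [ENNReal.toReal_ofReal hω]

lemma integrable_withDensity_ofReal_iff (hh : Measurable h) (hh₀ : 0 ≤ᵐ[μ] h) {φ : Ω → ℝ} :
    Integrable φ (μ.withDensity fun ω => ENNReal.ofReal (h ω)) ↔
      Integrable (fun ω => h ω * φ ω) μ := by
  rw [integrable_withDensity_iff hh.ennreal_ofReal (.of_forall fun _ => ENNReal.ofReal_lt_top)]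
  exact integrable_congr (hh₀.mono fun ω hω => by simp [ENNReal.toReal_ofReal hω, mul_comm])

lemma isProbabilityMeasure_withDensity_ofReal (hint : Integrable h μ) (hh₀ : 0 ≤ᵐ[μ] h)
    (h_one : ∫ ω, h ω ∂μ = 1) :
    IsProbabilityMeasure (μ.withDensity fun ω => ENNReal.ofReal (h ω)) :=
  ⟨by rw [withDensity_apply _ .univ, setLIntegral_univ,
    ← ofReal_integral_eq_lintegral_ofReal hint hh₀, h_one, ENNReal.ofReal_one]⟩

lemma ae_eq_one_of_withDensity_ofReal_eq_self [SigmaFinite μ] (hh : Measurable h)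
    (h_eq : (μ.withDensity fun ω => ENNReal.ofReal (h ω)) = μ) : h =ᵐ[μ] 1 := by
  conv_rhs at h_eq => rw [← withDensity_one (μ := μ)]
  have h_ae := (withDensity_eq_iff_of_sigmaFinite hh.ennreal_ofReal.aemeasurable
    aemeasurable_one).mp h_eq
  exact h_ae.mono fun _ hω => ENNReal.ofReal_eq_one.mp hω

lemma eq_of_toReal_rnDeriv_ae_eq_const [IsProbabilityMeasure μ] [IsProbabilityMeasure ν]
    (hνμ : ν ≪ μ) {c : ℝ} (hc : (fun ω => (ν.rnDeriv μ ω).toReal) =ᵐ[μ] fun _ => c) : ν = μ := by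
  have hc_one : c = 1 := by
    simpa [integral_congr_ae hc] using Measure.integral_toReal_rnDeriv hνμ
  refine (Measure.rnDeriv_eq_one_iff_eq hνμ).mp ?_
  filter_upwards [hc, Measure.rnDeriv_lt_top ν μ] with ω hω hω_top
  rw [← ENNReal.ofReal_toReal hω_top.ne, hω, hc_one, ENNReal.ofReal_one, Pi.one_apply]

lemma integral_toReal_rnDeriv_withDensity_ofReal [ν.HaveLebesgueDecomposition μ] [SigmaFinite ν]
    (hνμ : ν ≪ μ) (hh : Measurable h) (hh₀ : 0 ≤ᵐ[μ] h) :
    ∫ ω, (ν.rnDeriv μ ω).toReal ∂(μ.withDensity fun ω => ENNReal.ofReal (h ω)) =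
      ∫ ω, h ω ∂ν := by
  simp_rw [integral_withDensity_ofReal hh hh₀, mul_comm (h _)]
  exact integral_toReal_rnDeriv_mul hνμ

lemma integrable_toReal_rnDeriv_withDensity_ofReal_iff [ν.HaveLebesgueDecomposition μ]
    [SigmaFinite ν] (hνμ : ν ≪ μ) (hh : Measurable h) (hh₀ : 0 ≤ᵐ[μ] h) :
    Integrable (fun ω => (ν.rnDeriv μ ω).toReal)
        (μ.withDensity fun ω => ENNReal.ofReal (h ω)) ↔ Integrable h ν := by
  simp_rw [integrable_withDensity_ofReal_iff hh hh₀, mul_comm (h _)]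
  exact integrable_rnDeriv_smul_iff hνμ

variable {ι : Type*}

/-- Completeness, in the statistical sense, of the strictly positive functions in
`⋂ᵢ L¹(ρ i) ∩ L¹(μ)` with respect to the family `{ρ i} ∪ {μ}`. -/
def PositiveFunctionsComplete (μ : Measure Ω) (ρ : ι → Measure Ω) : Prop :=
  ∀ g : Ω → ℝ, Measurable g → (∀ᵐ ω ∂μ, 0 < g ω) → (∀ i, Integrable g (ρ i)) → Integrable g μ →
    (∀ i, ∫ ω, g ω ∂(ρ i) = ∫ ω, g ω ∂μ) → ∃ c : ℝ, g =ᵐ[μ] fun _ => c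

def equivProbMeasuresWithUnitMeans (μ : Measure Ω) (Y : ι → Ω → ℝ) : Set (Measure Ω) :=
  {ν | IsProbabilityMeasure ν ∧ ν ≪ μ ∧ μ ≪ ν ∧ ∀ i, ∫ ω, Y i ω ∂ν = 1}

section UnitMeans

variable [IsProbabilityMeasure μ] {Y : ι → Ω → ℝ}

lemma withDensity_ofReal_div_integral_mem_equivProbMeasuresWithUnitMeans
    (hY : ∀ i, Measurable (Y i)) (hY₀ : ∀ i, 0 ≤ᵐ[μ] Y i) {g : Ω → ℝ} (hg : Measurable g)
    (hg_pos : ∀ᵐ ω ∂μ, 0 < g ω) (hg_int : Integrable g μ)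
    (hg_bal : ∀ i, ∫ ω, g ω ∂(μ.withDensity fun ω => ENNReal.ofReal (Y i ω)) = ∫ ω, g ω ∂μ) :
    (μ.withDensity fun ω => ENNReal.ofReal (g ω / ∫ ω, g ω ∂μ)) ∈
      equivProbMeasuresWithUnitMeans μ Y := by
  set c := ∫ ω, g ω ∂μ
  have hc : 0 < c := integral_pos_of_ae_pos hg_int hg_pos
  have hf₀ : 0 ≤ᵐ[μ] fun ω => g ω / c := hg_pos.mono fun _ hω => (div_pos hω hc).le
  refine ⟨isProbabilityMeasure_withDensity_ofReal (hg_int.div_const c) hf₀ ?_,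
    withDensity_absolutelyContinuous _ _,
    withDensity_absolutelyContinuous' (hg.div_const c).ennreal_ofReal.aemeasurable
      (hg_pos.mono fun _ hω => (ENNReal.ofReal_pos.mpr (div_pos hω hc)).ne'), fun i => ?_⟩
  · rw [integral_div, div_self hc.ne']
  · rw [integral_withDensity_ofReal (hg.div_const c) hf₀]
    simp_rw [div_mul_eq_mul_div, integral_div, mul_comm (g _),
      ← integral_withDensity_ofReal (hY i) (hY₀ i), hg_bal i, div_self hc.ne']

lemma positiveFunctionsComplete_of_forall_mem_eq (hY : ∀ i, Measurable (Y i))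
    (hY₀ : ∀ i, 0 ≤ᵐ[μ] Y i) (huniq : ∀ ν ∈ equivProbMeasuresWithUnitMeans μ Y, ν = μ) :
    PositiveFunctionsComplete μ fun i => μ.withDensity fun ω => ENNReal.ofReal (Y i ω) := by
  intro g hg hg_pos _ hg_int hg_bal
  have h_eq := huniq _ (withDensity_ofReal_div_integral_mem_equivProbMeasuresWithUnitMeans hY hY₀
    hg hg_pos hg_int hg_bal)
  have hc : 0 < ∫ ω, g ω ∂μ := integral_pos_of_ae_pos hg_int hg_pos
  refine ⟨∫ ω, g ω ∂μ, ?_⟩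
  filter_upwards [ae_eq_one_of_withDensity_ofReal_eq_self (hg.div_const _) h_eq] with ω hω
  exact (div_eq_one_iff_eq hc.ne').mp hω

lemma eq_of_mem_equivProbMeasuresWithUnitMeans (hY : ∀ i, Measurable (Y i))
    (hY₀ : ∀ i, 0 ≤ᵐ[μ] Y i)
    (hcomplete : PositiveFunctionsComplete μ fun i => μ.withDensity fun ω => ENNReal.ofReal (Y i ω))
    (hν : ν ∈ equivProbMeasuresWithUnitMeans μ Y) : ν = μ := by
  obtain ⟨hν_prob, hνμ, hμν, hν_mean⟩ := hν
  have hν_int : ∀ i, Integrable (Y i) ν := fun i =>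
    Integrable.of_integral_ne_zero (by rw [hν_mean i]; exact one_ne_zero)
  have h_pos : ∀ᵐ ω ∂μ, 0 < (ν.rnDeriv μ ω).toReal := by
    filter_upwards [Measure.rnDeriv_pos' hμν, Measure.rnDeriv_lt_top ν μ] with ω h₀ h_top
    exact ENNReal.toReal_pos h₀.ne' h_top.ne
  obtain ⟨c, hc⟩ := hcomplete _ (Measure.measurable_rnDeriv ν μ).ennreal_toReal h_pos
    (fun i => (integrable_toReal_rnDeriv_withDensity_ofReal_iff hνμ (hY i) (hY₀ i)).mpr (hν_int i))
    Measure.integrable_toReal_rnDeriv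
    fun i => by
      rw [integral_toReal_rnDeriv_withDensity_ofReal hνμ (hY i) (hY₀ i), hν_mean i,
        Measure.integral_toReal_rnDeriv hνμ, probReal_univ]
  exact eq_of_toReal_rnDeriv_ae_eq_const hνμ hc

theorem equivProbMeasuresWithUnitMeans_eq_singleton_iff (hY : ∀ i, Measurable (Y i))
    (hY₀ : ∀ i, 0 ≤ᵐ[μ] Y i) (hμ : ∀ i, ∫ ω, Y i ω ∂μ = 1) :
    equivProbMeasuresWithUnitMeans μ Y = {μ} ↔
      PositiveFunctionsComplete μ fun i => μ.withDensity fun ω => ENNReal.ofReal (Y i ω) := by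
  rw [Set.eq_singleton_iff_unique_mem]
  exact ⟨fun h => positiveFunctionsComplete_of_forall_mem_eq hY hY₀ h.2,
    fun h => ⟨⟨inferInstance, .rfl, .rfl, hμ⟩,
      fun _ hν => eq_of_mem_equivProbMeasuresWithUnitMeans hY hY₀ h hν⟩⟩

end UnitMeans

end MeasureTheory

open MeasureTheory

theorem stmt_13_general {Ω : Type*} {m : MeasurableSpace Ω}
    (Q : Measure Ω) [IsProbabilityMeasure Q]
    (d : ℕ) (X : Fin d → Ω → ℝ)
    (hXmeas : ∀ i, Measurable (X i))
    (hXpos : ∀ i, ∀ ω, 0 < X i ω)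
    (x₀ : Fin d → ℝ) (hx₀ : ∀ i, 0 < x₀ i)
    (hQmartM : ∀ i, ∫ ω, X i ω ∂Q = x₀ i)
    (Qi : Fin d → Measure Ω)
    (hQi : ∀ i, Qi i = Q.withDensity (fun ω => ENNReal.ofReal (X i ω / x₀ i)))
    (𝓟 : Set (Measure Ω))
    (h𝓟 : 𝓟 = {Q' : Measure Ω | IsProbabilityMeasure Q' ∧ Q' ≪ Q ∧ Q ≪ Q' ∧
      ∀ i, ∫ ω, X i ω ∂Q' = x₀ i}) :
    𝓟 = {Q} ↔
      ∀ g : Ω → ℝ, Measurable g → (∀ᵐ ω ∂Q, 0 < g ω) →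
        (∀ i, Integrable g (Qi i)) → Integrable g Q →
        (∀ i, ∫ ω, g ω ∂(Qi i) = ∫ ω, g ω ∂Q) →
        ∃ c : ℝ, g =ᵐ[Q] fun _ => c := by
  have h_mean_iff : ∀ (ν : Measure Ω) i, ∫ ω, X i ω / x₀ i ∂ν = 1 ↔ ∫ ω, X i ω ∂ν = x₀ i :=
    fun ν i => by rw [integral_div, div_eq_one_iff_eq (hx₀ i).ne']
  have h𝓟_eq : 𝓟 = equivProbMeasuresWithUnitMeans Q fun i ω => X i ω / x₀ i := by
    simp only [h𝓟, equivProbMeasuresWithUnitMeans, h_mean_iff]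
  rw [h𝓟_eq, funext hQi]
  exact equivProbMeasuresWithUnitMeans_eq_singleton_iff (fun i => (hXmeas i).div_const _)
    (fun i => .of_forall fun ω => (div_pos (hXpos i ω) (hx₀ i)).le)
    (fun i => (h_mean_iff Q i).mpr (hQmartM i))

/-- Two-time model (`I = {0,T}`, trivial `𝓕₀`): the martingale measure `Q`
(with `∫ X_Tⁱ dQ = x₀ⁱ`) is the unique equivalent martingale measure iff the
class of strictly positive functions in `⋂ᵢ L₁(Qᵢ) ∩ L₁(Q)` is complete with
respect to `{Q₁,…,Q_d,Q}`, where `dQᵢ/dQ = X_Tⁱ/x₀ⁱ`. -/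
theorem stmt_13 {Ω : Type*} {m : MeasurableSpace Ω}
    (Q : Measure Ω) [IsProbabilityMeasure Q]
    (d : ℕ) (X : Fin d → Ω → ℝ)
    (hXmeas : ∀ i, Measurable (X i))
    (hXpos : ∀ i, ∀ ω, 0 < X i ω)
    (hXint : ∀ i, Integrable (X i) Q)
    (x₀ : Fin d → ℝ) (hx₀ : ∀ i, 0 < x₀ i)
    (hQmartM : ∀ i, ∫ ω, X i ω ∂Q = x₀ i)
    (Qi : Fin d → Measure Ω)
    (hQi : ∀ i, Qi i = Q.withDensity (fun ω => ENNReal.ofReal (X i ω / x₀ i)))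
    (𝓟 : Set (Measure Ω))
    (h𝓟 : 𝓟 = {Q' : Measure Ω | IsProbabilityMeasure Q' ∧ Q' ≪ Q ∧ Q ≪ Q' ∧
      ∀ i, ∫ ω, X i ω ∂Q' = x₀ i}) :
    𝓟 = {Q} ↔
      ∀ g : Ω → ℝ, Measurable g → (∀ᵐ ω ∂Q, 0 < g ω) →
        (∀ i, Integrable g (Qi i)) → Integrable g Q →
        (∀ i, ∫ ω, g ω ∂(Qi i) = ∫ ω, g ω ∂Q) →
        ∃ c : ℝ, g =ᵐ[Q] fun _ => c :=
  stmt_13_general (m := m) Q d X hXmeas hXpos x₀ hx₀ hQmartM Qi hQi 𝓟 h𝓟
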